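/- Let q = 2^(2m) with m ≥ 1. Then the number of β ∈ F_q with Tr(β³) = 1 equals 2^(2m-1) + (-2)^m, i.e. q/2 + (-1)^m √q. -/

import Mathlib

/-!
Put `S = ∑ β, (-1) ^ Tr(β³)`, so that the count is `(q - S) / 2`. In characteristic two
`x³ + (x + z)³ = x²z + xz² + z³`, and `Tr(xz²) = Tr(x²z⁴)` by Frobenius invariance, so
`S² = ∑ z, (-1) ^ Tr(z³) ∑ x, (-1) ^ Tr(x²(z + z⁴))`. The inner sum is `q` for `z` in the
subfield `𝔽₄ = {z | z⁴ = z}`, on which `Tr(z³) = 0`, and vanishes otherwise; hence `S² = 4q`.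
As `x ↦ x³` is three-to-one on `𝔽_q^×`, `S ≡ 1 mod 3`, which fixes the sign: `S = (-2)^(m+1)`.
-/

open Finset Polynomial FiniteField

theorem IsPrimitiveRoot.card_nthRootsFinset_pow {R : Type*} [CommRing R] [IsDomain R] {ζ : R}
    {n : ℕ} (h : IsPrimitiveRoot ζ n) {a : R} (ha : a ≠ 0) : #(nthRootsFinset n (a ^ n)) = n := by
  classical
  rw [nthRootsFinset_def, Multiset.toFinset_card_of_nodup (h.nthRoots_nodup (pow_ne_zero n ha)),
    h.card_nthRoots, if_pos ⟨a, rfl⟩]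

namespace FiniteField

variable {F : Type*} [Field F] [Fintype F]

theorem exists_isPrimitiveRoot_of_dvd {n : ℕ} (hn : n ∣ Fintype.card F - 1) :
    ∃ ζ : F, IsPrimitiveRoot ζ n := by
  classical
  obtain ⟨g, hg⟩ := IsCyclic.exists_ofOrder_eq_natCard (α := Fˣ)
  rw [Nat.card_eq_fintype_card, Fintype.card_units] at hg
  have hg0 : orderOf g ≠ 0 := hg ▸ (Nat.sub_pos_of_lt Fintype.one_lt_card).ne'
  refine ⟨(g ^ (orderOf g / n) : Fˣ), IsPrimitiveRoot.coe_units_iff.mpr ?_⟩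
  exact IsPrimitiveRoot.iff_orderOf.mpr (orderOf_pow_orderOf_div hg0 (hg ▸ hn))

theorem dvd_sum_erase_zero_pow [DecidableEq F] {n : ℕ} (hn : n ∣ Fintype.card F - 1)
    (f : F → ℤ) : (n : ℤ) ∣ ∑ x ∈ univ.erase 0, f (x ^ n) := by
  obtain ⟨ζ, hζ⟩ := exists_isPrimitiveRoot_of_dvd hn
  have hn0 : 0 < n := Nat.pos_of_dvd_of_pos hn (Nat.sub_pos_of_lt Fintype.one_lt_card)
  rw [Finset.sum_comp]
  refine dvd_sum fun b hb => ?_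
  obtain ⟨a, ha, rfl⟩ := mem_image.mp hb
  have ha0 : a ≠ 0 := ne_of_mem_erase ha
  have hfiber : ({x ∈ univ.erase 0 | x ^ n = a ^ n} : Finset F) = nthRootsFinset n (a ^ n) := by
    ext x
    simp only [mem_filter, mem_erase, mem_univ, and_true, mem_nthRootsFinset hn0,
      and_iff_right_iff_imp]
    rintro hx rfl
    exact pow_ne_zero n ha0 (hx ▸ zero_pow hn0.ne')
  rw [hfiber, hζ.card_nthRootsFinset_pow ha0, nsmul_eq_mul]
  exact dvd_mul_right _ _

theorem card_pow_succ_eq_self [DecidableEq F] {n : ℕ} (hn : n ∣ Fintype.card F - 1) :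
    #{z : F | z ^ (n + 1) = z} = n + 1 := by
  obtain ⟨ζ, hζ⟩ := exists_isPrimitiveRoot_of_dvd hn
  have hn0 : 0 < n := Nat.pos_of_dvd_of_pos hn (Nat.sub_pos_of_lt Fintype.one_lt_card)
  have hset : ({z : F | z ^ (n + 1) = z} : Finset F) = insert 0 (nthRootsFinset n (1 : F)) := by
    ext z
    rcases eq_or_ne z 0 with rfl | hz
    · simp
    · simp [mem_nthRootsFinset hn0, pow_succ, mul_eq_right₀ hz, hz]
  rw [hset, card_insert_of_notMem (by simp [mem_nthRootsFinset hn0, hn0.ne']),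
    hζ.card_nthRootsFinset]

end FiniteField

theorem Int.eq_of_sq_eq_sq_of_three_dvd_sub_one {a b : ℤ} (h : a ^ 2 = b ^ 2) (ha : 3 ∣ a - 1)
    (hb : 3 ∣ b - 1) : a = b := by
  rcases sq_eq_sq_iff_eq_or_eq_neg.mp h with h | h <;> omega

def signChar : AddChar (ZMod 2) ℤ where
  toFun t := if t = 0 then 1 else -1
  map_zero_eq_one' := rfl
  map_add_eq_mul' := by decide

theorem signChar_eq (t : ZMod 2) : signChar t = 1 - 2 * if t = 1 then 1 else 0 := by
  fin_cases t <;> rfl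

theorem sum_signChar {α : Type*} [Fintype α] (g : α → ZMod 2) :
    ∑ a, signChar (g a) = Fintype.card α - 2 * #{a | g a = 1} := by
  simp only [signChar_eq, sum_sub_distrib, ← mul_sum, sum_boole, sum_const, card_univ,
    nsmul_eq_mul, mul_one]

noncomputable section TraceChar

variable (F : Type*) [Field F] [Algebra (ZMod 2) F]

def traceChar : AddChar F ℤ :=
  signChar.compAddMonoidHom (Algebra.trace (ZMod 2) F).toAddMonoidHom

theorem traceChar_apply {F : Type*} [Field F] [Algebra (ZMod 2) F] (x : F) :
    traceChar F x = signChar (Algebra.trace (ZMod 2) F x) := rfl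

variable [Fintype F]

def cubicWeilSum : ℤ := ∑ x : F, traceChar F (x ^ 3)

variable {F}

theorem traceChar_isPrimitive : (traceChar F).IsPrimitive := by
  intro a ha h
  obtain ⟨y, hy⟩ := Algebra.trace_surjective (ZMod 2) F 1
  have := DFunLike.congr_fun h (a⁻¹ * y)
  rw [AddChar.mulShift_apply, AddChar.one_apply, mul_inv_cancel_left₀ ha, traceChar_apply,
    hy] at this
  exact absurd this (by decide)

theorem traceChar_sq (x : F) : traceChar F (x ^ 2) = traceChar F x := by
  have := Algebra.trace_eq_of_algEquiv (frobeniusAlgEquivOfAlgebraic (ZMod 2) F) x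
  rw [coe_frobeniusAlgEquivOfAlgebraic, ZMod.card] at this
  rw [traceChar_apply, traceChar_apply, this]

theorem sum_traceChar_sq_mul [DecidableEq F] (b : F) :
    ∑ x : F, traceChar F (x ^ 2 * b) = if b = 0 then (Fintype.card F : ℤ) else 0 := by
  refine ((frobeniusAlgEquivOfAlgebraic (ZMod 2) F).toEquiv.sum_comp
    fun y => traceChar F (y * b)).trans ?_
  simpa using AddChar.sum_mulShift b traceChar_isPrimitive

theorem traceChar_cube_mul_traceChar_add_cube (x z : F) :
    traceChar F (x ^ 3) * traceChar F ((x + z) ^ 3)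
      = traceChar F (x ^ 2 * (z + z ^ 4)) * traceChar F (z ^ 3) := by
  have : CharP F 2 := charP_of_injective_algebraMap (algebraMap (ZMod 2) F).injective 2
  have h2 : (2 : F) = 0 := CharTwo.two_eq_zero
  calc traceChar F (x ^ 3) * traceChar F ((x + z) ^ 3)
      = traceChar F (x ^ 2 * z + x * z ^ 2 + z ^ 3) := by
        rw [← AddChar.map_add_eq_mul]
        congr 1
        linear_combination (x ^ 3 + x ^ 2 * z + x * z ^ 2) * h2
    _ = traceChar F (x ^ 2 * z) * traceChar F ((x * z ^ 2) ^ 2) * traceChar F (z ^ 3) := by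
        rw [AddChar.map_add_eq_mul, AddChar.map_add_eq_mul, traceChar_sq]
    _ = traceChar F (x ^ 2 * (z + z ^ 4)) * traceChar F (z ^ 3) := by
        rw [← AddChar.map_add_eq_mul]
        ring_nf

theorem trace_one_eq_zero_of_card_eq_four_pow {m : ℕ} (hF : Fintype.card F = 4 ^ m) :
    Algebra.trace (ZMod 2) F 1 = 0 := by
  have hcard := Module.card_eq_pow_finrank (K := ZMod 2) (V := F)
  rw [ZMod.card, hF, show 4 ^ m = 2 ^ (2 * m) by rw [pow_mul]; norm_num] at hcard
  rw [← map_one (algebraMap (ZMod 2) F), Algebra.trace_algebraMap,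
    ← Nat.pow_right_injective le_rfl hcard, nsmul_eq_mul, mul_one, Nat.cast_mul]
  exact mul_eq_zero_of_left rfl _

theorem cubicWeilSum_sq (h3 : 3 ∣ Fintype.card F - 1) (h1 : Algebra.trace (ZMod 2) F 1 = 0) :
    cubicWeilSum F ^ 2 = 4 * Fintype.card F := by
  classical
  have : CharP F 2 := charP_of_injective_algebraMap (algebraMap (ZMod 2) F).injective 2
  have hF₄ : ∀ z : F, z ^ 4 = z → traceChar F (z ^ 3) = 1 := by
    intro z hz
    rcases eq_or_ne z 0 with rfl | hz0
    · simp
    · rw [pow_succ, mul_eq_right₀ hz0] at hz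
      rw [hz, traceChar_apply, h1]
      rfl
  calc cubicWeilSum F ^ 2
      = ∑ x : F, ∑ z : F, traceChar F (x ^ 3) * traceChar F ((x + z) ^ 3) := by
        rw [cubicWeilSum, sq, sum_mul_sum]
        exact sum_congr rfl fun x _ =>
          (Equiv.sum_comp (Equiv.addLeft x) fun y => traceChar F (x ^ 3) * traceChar F (y ^ 3)).symm
    _ = ∑ z : F, (if z + z ^ 4 = 0 then (Fintype.card F : ℤ) else 0) * traceChar F (z ^ 3) := by
        rw [sum_comm]
        simp_rw [traceChar_cube_mul_traceChar_add_cube, ← sum_mul, sum_traceChar_sq_mul]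
    _ = ∑ z : F, if z ^ 4 = z then (Fintype.card F : ℤ) else 0 := by
        refine sum_congr rfl fun z _ => ?_
        rw [CharTwo.add_eq_zero, @eq_comm _ z]
        split_ifs with hz
        · rw [hF₄ z hz, mul_one]
        · rw [zero_mul]
    _ = 4 * Fintype.card F := by
        rw [sum_ite, sum_const_zero, add_zero, sum_const,
          FiniteField.card_pow_succ_eq_self h3, nsmul_eq_mul]
        norm_num

theorem cubicWeilSum_sub_one_dvd (h3 : 3 ∣ Fintype.card F - 1) :
    (3 : ℤ) ∣ cubicWeilSum F - 1 := by
  classical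
  rw [cubicWeilSum, ← add_sum_erase _ _ (mem_univ 0)]
  simpa using FiniteField.dvd_sum_erase_zero_pow h3 fun y => traceChar F y

theorem cubicWeilSum_eq {m : ℕ} (hF : Fintype.card F = 4 ^ m) :
    cubicWeilSum F = (-2) ^ (m + 1) := by
  have h3 : 3 ∣ Fintype.card F - 1 := by
    simpa [hF] using Nat.sub_dvd_pow_sub_pow 4 1 m
  refine Int.eq_of_sq_eq_sq_of_three_dvd_sub_one ?_ (cubicWeilSum_sub_one_dvd h3) ?_
  · rw [cubicWeilSum_sq h3 (trace_one_eq_zero_of_card_eq_four_pow hF), hF, ← pow_mul,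
      mul_comm (m + 1), pow_mul]
    push_cast
    ring
  · simpa using sub_dvd_pow_sub_pow (-2 : ℤ) 1 (m + 1)

theorem two_mul_card_trace_cube_eq_one {m : ℕ} (hF : Fintype.card F = 4 ^ m) :
    2 * (#{β : F | Algebra.trace (ZMod 2) F (β ^ 3) = 1} : ℤ) = 4 ^ m - (-2) ^ (m + 1) := by
  have hS : ∑ β : F, signChar (Algebra.trace (ZMod 2) F (β ^ 3)) = (-2) ^ (m + 1) :=
    cubicWeilSum_eq hF
  rw [sum_signChar, hF] at hS
  push_cast at hS
  linarith

end TraceChar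

theorem stmt5 (m : ℕ) (hm : 1 ≤ m) :
    (({β : GaloisField 2 (2 * m) |
        Algebra.trace (ZMod 2) (GaloisField 2 (2 * m)) (β ^ 3) = 1} :
          Set (GaloisField 2 (2 * m))).ncard : ℤ)
      = 2 ^ (2 * m - 1) + (-2) ^ m := by
  let _ : Fintype (GaloisField 2 (2 * m)) := Fintype.ofFinite _
  have hF : Fintype.card (GaloisField 2 (2 * m)) = 4 ^ m := by
    rw [← Nat.card_eq_fintype_card, GaloisField.card 2 (2 * m) (by omega), pow_mul]
    norm_num
  have h4 : (4 : ℤ) ^ m = 2 * 2 ^ (2 * m - 1) := by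
    rw [← pow_succ', Nat.sub_add_cancel (by omega), pow_mul]
    norm_num
  have hcount := two_mul_card_trace_cube_eq_one hF
  rw [pow_succ, h4] at hcount
  rw [Set.ncard_eq_toFinset_card', Set.toFinset_ofPred]
  linarith
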